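/- Consistency of the lifted Paxos model: if initL →SDPL* (ctr, (msgs, maxBal, maxVal)) and both Chosen(msgs, v1) and Chosen(msgs, v2) hold, then v1 = v2. -/

import Mathlib

/-- Messages of the single-decree Paxos model. -/
inductive M (A V : Type) where
  | msg1a (b : ℕ)
  | msg1b (a : A) (b : ℕ) (w : Option (ℕ × V))
  | msg2a (b : ℕ) (v : V)
  | msg2b (a : A) (b : ℕ) (v : V)

/-- An SDP state: sent messages, per-acceptor maximal ballot, per-acceptor last accepted value. -/
abbrev SDPState (A V : Type) := Set (M A V) × (A → Option ℕ) × (A → Option (ℕ × V))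

/-- The initial SDP state. -/
def SDPInit (A V : Type) : SDPState A V := (∅, fun _ => none, fun _ => none)

/-- `none <ᵒ b` always; `some b0 <ᵒ b` iff `b0 < b`. -/
def optLT : Option ℕ → ℕ → Prop
  | none, _ => True
  | some b0, b => b0 < b

/-- `none ≤ᵒ b` always; `some b0 ≤ᵒ b` iff `b0 ≤ b`. -/
def optLE : Option ℕ → ℕ → Prop
  | none, _ => True
  | some b0, b => b0 ≤ b

/-- The 1b-messages with a reported accepted value, for ballot `b` from members of `Q`. -/
def Q1bv {A V : Type} (msgs : Set (M A V)) (Q : Set A) (b : ℕ) : Set (M A V) :=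
  { m | m ∈ msgs ∧ ∃ a ∈ Q, ∃ p : ℕ × V, m = M.msg1b a b (some p) }

/-- Every acceptor in `Q` has sent a 1b-message for ballot `b`. -/
def HavePromised {A V : Type} (msgs : Set (M A V)) (Q : Set A) (b : ℕ) : Prop :=
  ∀ a ∈ Q, ∃ w, M.msg1b a b w ∈ msgs

/-- `v` is the value with maximal reported ballot among the 1b-messages for `b` from `Q`. -/
def IsMaxVote {A V : Type} (msgs : Set (M A V)) (Q : Set A) (b : ℕ) (v : V) : Prop :=
  ∃ (a0 : A) (b0 : ℕ),
    M.msg1b a0 b (some (b0, v)) ∈ Q1bv msgs Q b ∧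
    ∀ m' ∈ Q1bv msgs Q b, ∃ a' b' v', m' = M.msg1b a' b (some (b', v')) ∧ b' ≤ b0

/-- Proposing `v` at ballot `b` is safe, as witnessed by quorum `Q`. -/
def ShowsSafeAt {A V : Type} (msgs : Set (M A V)) (Q : Set A) (b : ℕ) (v : V) : Prop :=
  HavePromised msgs Q b ∧ (Q1bv msgs Q b = ∅ ∨ IsMaxVote msgs Q b v)

/-- The transition relation of the single-decree Paxos model. -/
inductive SDPStep {A V : Type} [DecidableEq A] (Quorum : Set A → Prop) :
    SDPState A V → SDPState A V → Prop where
  | phase1a (msgs : Set (M A V)) (mb : A → Option ℕ) (mv : A → Option (ℕ × V)) (b : ℕ) :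
      SDPStep Quorum (msgs, mb, mv) (msgs ∪ {M.msg1a b}, mb, mv)
  | phase1b (msgs : Set (M A V)) (mb : A → Option ℕ) (mv : A → Option (ℕ × V))
      (a : A) (b : ℕ)
      (h1 : M.msg1a b ∈ msgs) (h2 : optLT (mb a) b) :
      SDPStep Quorum (msgs, mb, mv)
        (msgs ∪ {M.msg1b a b (mv a)}, Function.update mb a (some b), mv)
  | phase2a (msgs : Set (M A V)) (mb : A → Option ℕ) (mv : A → Option (ℕ × V))
      (b : ℕ) (v : V) (Q : Set A)
      (h1 : ¬ ∃ v', M.msg2a b v' ∈ msgs) (h2 : Quorum Q)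
      (h3 : ShowsSafeAt msgs Q b v) :
      SDPStep Quorum (msgs, mb, mv) (msgs ∪ {M.msg2a b v}, mb, mv)
  | phase2b (msgs : Set (M A V)) (mb : A → Option ℕ) (mv : A → Option (ℕ × V))
      (a : A) (b : ℕ) (v : V)
      (h1 : M.msg2a b v ∈ msgs) (h2 : optLE (mb a) b) :
      SDPStep Quorum (msgs, mb, mv)
        (msgs ∪ {M.msg2b a b v}, Function.update mb a (some b),
          Function.update mv a (some (b, v)))

/-- A value `v` is chosen: a quorum of acceptors have sent `msg2b` for `v` at some ballot. -/
def Chosen {A V : Type} (Quorum : Set A → Prop) (msgs : Set (M A V)) (v : V) : Prop :=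
  ∃ (b : ℕ) (Q : Set A), Quorum Q ∧ ∀ a ∈ Q, M.msg2b a b v ∈ msgs

/-- The transition relation of the lifted single-decree Paxos model over `n` proposers. -/
inductive SDPLStep {A V : Type} [DecidableEq A] (Quorum : Set A → Prop) (n : ℕ) :
    ((Fin n → ℕ) × SDPState A V) → ((Fin n → ℕ) × SDPState A V) → Prop where
  | inc (ctr : Fin n → ℕ) (s : SDPState A V) (p : Fin n) :
      SDPLStep Quorum n (ctr, s) (Function.update ctr p (ctr p + 1), s)
  | ruleA (ctr : Fin n → ℕ) (msgs : Set (M A V)) (mb : A → Option ℕ)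
      (mv : A → Option (ℕ × V)) (m : M A V) (p : Fin n) (k : ℕ)
      (hstep : SDPStep Quorum (msgs, mb, mv) (msgs ∪ {m}, mb, mv))
      (hk : ctr p = k)
      (hm : m = M.msg1a (k * n + p.val) ∨ ∃ v, m = M.msg2a (k * n + p.val) v) :
      SDPLStep Quorum n (ctr, (msgs, mb, mv)) (ctr, (msgs ∪ {m}, mb, mv))
  | ruleB (ctr : Fin n → ℕ) (msgs : Set (M A V)) (mb mb' : A → Option ℕ)
      (mv mv' : A → Option (ℕ × V)) (m : M A V)
      (hstep : SDPStep Quorum (msgs, mb, mv) (msgs ∪ {m}, mb', mv'))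
      (hm : (∃ a b w, m = M.msg1b a b w) ∨ (∃ a b v, m = M.msg2b a b v)) :
      SDPLStep Quorum n (ctr, (msgs, mb, mv)) (ctr, (msgs ∪ {m}, mb', mv'))

/-- The initial state of the lifted single-decree Paxos model. -/
def SDPLInit (A V : Type) (n : ℕ) : (Fin n → ℕ) × SDPState A V :=
  (fun _ => 0, SDPInit A V)

/-!
Every lifted step projects to a single-decree step or to a stutter, so it suffices to prove
consistency for every reachable state of the single-decree model. That follows from the usual
inductive invariant of Paxos: a 1b message for ballot `b` truthfully reports the sender's last
vote below `b`, and the sender never votes below `b` afterwards; `maxVal a` is the last vote of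
`a`; there is at most one 2a message per ballot; and every proposed value is safe at its ballot,
i.e. for each smaller ballot some quorum has voted for it there or will never vote there. By
quorum intersection, a value chosen at ballot `b1` is then the only one proposed at any `b2 ≥ b1`.
-/

theorem optLT_iff_lt {o : WithBot ℕ} {b : ℕ} : optLT o b ↔ o < b := by
  cases o with
  | bot => exact iff_of_true trivial (WithBot.bot_lt_coe b)
  | coe c => exact WithBot.coe_lt_coe.symm

theorem optLE_iff_le {o : WithBot ℕ} {b : ℕ} : optLE o b ↔ o ≤ b := by
  cases o with
  | bot => exact iff_of_true trivial bot_le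
  | coe c => exact WithBot.coe_le_coe.symm

section Invariant

variable {A V : Type}

namespace SDPState

/-- `maxBal` with `none` read as `⊥`, below every ballot. -/
def maxBal (s : SDPState A V) (a : A) : WithBot ℕ := s.2.1 a

def WontVote (s : SDPState A V) (a : A) (c : ℕ) : Prop :=
  (∀ v, M.msg2b a c v ∉ s.1) ∧ (c : WithBot ℕ) < s.maxBal a

def SafeAt (Quorum : Set A → Prop) (s : SDPState A V) (b : ℕ) (v : V) : Prop :=
  ∀ c < b, ∃ Q, Quorum Q ∧ ∀ a ∈ Q, M.msg2b a c v ∈ s.1 ∨ s.WontVote a c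

end SDPState

def IsLastVoteBelow (msgs : Set (M A V)) (a : A) (b : ℕ) (w : Option (ℕ × V)) : Prop :=
  (∀ c v, w = some (c, v) → c < b ∧ M.msg2b a c v ∈ msgs) ∧
    ∀ c v, c < b → M.msg2b a c v ∈ msgs → ∃ c' v', w = some (c', v') ∧ c ≤ c'

theorem IsLastVoteBelow.mono {msgs msgs' : Set (M A V)} {a : A} {b : ℕ} {w : Option (ℕ × V)}
    (hw : IsLastVoteBelow msgs a b w) (hsub : msgs ⊆ msgs')
    (hold : ∀ c v, c < b → M.msg2b a c v ∈ msgs' → M.msg2b a c v ∈ msgs) :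
    IsLastVoteBelow msgs' a b w :=
  ⟨fun c v h => (hw.1 c v h).imp_right (@hsub _),
    fun c v hc hv => hw.2 c v hc (hold c v hc hv)⟩

structure SDPState.Inv (Quorum : Set A → Prop) (s : SDPState A V) : Prop where
  msg1b : ∀ a b w, M.msg1b a b w ∈ s.1 →
    (b : WithBot ℕ) ≤ s.maxBal a ∧ IsLastVoteBelow s.1 a b w
  maxVal : ∀ a (b : ℕ), s.maxBal a < b → IsLastVoteBelow s.1 a b (s.2.2 a)
  msg2a_unique : ∀ b v v', M.msg2a b v ∈ s.1 → M.msg2a b v' ∈ s.1 → v = v'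
  msg2a_safeAt : ∀ b v, M.msg2a b v ∈ s.1 → s.SafeAt Quorum b v
  msg2b : ∀ a b v, M.msg2b a b v ∈ s.1 →
    M.msg2a b v ∈ s.1 ∧ (b : WithBot ℕ) ≤ s.maxBal a

namespace SDPState.Inv

variable {Quorum : Set A → Prop} {s : SDPState A V} {Q : Set A} {a : A} {b c : ℕ} {v : V}

theorem init : (SDPInit A V).Inv Quorum := by
  constructor <;> simp [SDPInit, IsLastVoteBelow]

theorem wontVote_of_msg1b (hinv : s.Inv Quorum) {w : Option (ℕ × V)}
    (h1b : M.msg1b a b w ∈ s.1) (hc : c < b) (hno : ∀ v, M.msg2b a c v ∉ s.1) :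
    s.WontVote a c :=
  ⟨hno, lt_of_lt_of_le (WithBot.coe_lt_coe.mpr hc) (hinv.msg1b a b w h1b).1⟩

theorem safeAt_of_showsSafeAt (hinv : s.Inv Quorum) (hQ : Quorum Q)
    (hsafe : ShowsSafeAt s.1 Q b v) : s.SafeAt Quorum b v := by
  obtain ⟨hprom, hempty | ⟨a0, b0, hmax, hle⟩⟩ := hsafe
  · intro c hc
    refine ⟨Q, hQ, fun a ha => Or.inr ?_⟩
    obtain ⟨w, hw⟩ := hprom a ha
    refine hinv.wontVote_of_msg1b hw hc fun v' hv' => ?_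
    obtain ⟨c', v'', rfl, -⟩ := (hinv.msg1b a b w hw).2.2 c v' hc hv'
    have hreport : M.msg1b a b (some (c', v'')) ∈ Q1bv s.1 Q b := ⟨hw, a, ha, _, rfl⟩
    simp [hempty] at hreport
  · obtain ⟨-, hvote0⟩ := (hinv.msg1b a0 b _ hmax.1).2.1 b0 v rfl
    have h2a0 := (hinv.msg2b _ _ _ hvote0).1
    intro c hc
    rcases lt_or_ge c b0 with hcb0 | hb0c
    · exact hinv.msg2a_safeAt _ _ h2a0 c hcb0
    -- A member of `Q` that voted at `c ≥ b0` reported a vote at a ballot `≥ c`, which the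
    -- maximality of `b0` caps at `b0`; so `c = b0`, where the only proposed value is `v`.
    refine ⟨Q, hQ, fun a ha => ?_⟩
    obtain ⟨w, hw⟩ := hprom a ha
    by_cases hvoted : ∃ v', M.msg2b a c v' ∈ s.1
    · obtain ⟨v', hv'⟩ := hvoted
      obtain ⟨c', v'', rfl, hcc'⟩ := (hinv.msg1b a b w hw).2.2 c v' hc hv'
      obtain ⟨_, _, _, heq, hc'b0⟩ := hle _ ⟨hw, a, ha, _, rfl⟩
      simp only [M.msg1b.injEq, Option.some.injEq, Prod.mk.injEq] at heq
      obtain rfl : c = b0 := by omega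
      rw [hinv.msg2a_unique _ _ _ h2a0 (hinv.msg2b _ _ _ hv').1]
      exact Or.inl hv'
    · exact Or.inr (hinv.wontVote_of_msg1b hw hc (not_exists.mp hvoted))

theorem eq_of_chosenAt_of_le
    (hQint : ∀ Q1 Q2 : Set A, Quorum Q1 → Quorum Q2 → ∃ a, a ∈ Q1 ∧ a ∈ Q2)
    (hinv : s.Inv Quorum) {b1 b2 : ℕ} {v1 v2 : V} (hQ : Quorum Q)
    (hchosen : ∀ a ∈ Q, M.msg2b a b1 v1 ∈ s.1) (h2a : M.msg2a b2 v2 ∈ s.1)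
    (hle : b1 ≤ b2) : v1 = v2 := by
  rcases hle.eq_or_lt with rfl | hlt
  · obtain ⟨a, ha, -⟩ := hQint Q Q hQ hQ
    exact hinv.msg2a_unique _ _ _ (hinv.msg2b _ _ _ (hchosen a ha)).1 h2a
  · obtain ⟨Q', hQ', hsafe⟩ := hinv.msg2a_safeAt _ _ h2a b1 hlt
    obtain ⟨a, ha, ha'⟩ := hQint Q Q' hQ hQ'
    rcases hsafe a ha' with hv2 | hwont
    · exact hinv.msg2a_unique _ _ _ (hinv.msg2b _ _ _ (hchosen a ha)).1
        (hinv.msg2b _ _ _ hv2).1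
    · exact absurd (hchosen a ha) (hwont.1 v1)

theorem eq_of_chosen
    (hQint : ∀ Q1 Q2 : Set A, Quorum Q1 → Quorum Q2 → ∃ a, a ∈ Q1 ∧ a ∈ Q2)
    (hinv : s.Inv Quorum) {v1 v2 : V} (h1 : Chosen Quorum s.1 v1) (h2 : Chosen Quorum s.1 v2) :
    v1 = v2 := by
  obtain ⟨b1, Q1, hQ1, hall1⟩ := h1
  obtain ⟨b2, Q2, hQ2, hall2⟩ := h2
  have h2a : ∀ {Q b v}, Quorum Q → (∀ a ∈ Q, M.msg2b a b v ∈ s.1) →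
      M.msg2a b v ∈ s.1 :=
    fun hQ hall => by
      obtain ⟨a, ha, -⟩ := hQint _ _ hQ hQ
      exact (hinv.msg2b _ _ _ (hall a ha)).1
  rcases le_total b1 b2 with hle | hle
  · exact hinv.eq_of_chosenAt_of_le hQint hQ1 hall1 (h2a hQ2 hall2) hle
  · exact (hinv.eq_of_chosenAt_of_le hQint hQ2 hall2 (h2a hQ1 hall1) hle).symm

end SDPState.Inv

end Invariant

section Steps

variable {A V : Type} [DecidableEq A] {Quorum : Set A → Prop} {s s' : SDPState A V} {a : A}
  {b c : ℕ} {v : V}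

namespace SDPStep

theorem msgs_subset (h : SDPStep Quorum s s') : s.1 ⊆ s'.1 := by
  cases h <;> exact Set.subset_union_left

theorem maxBal_le (h : SDPStep Quorum s s') (a : A) : s.maxBal a ≤ s'.maxBal a := by
  cases h with
  | phase1b _ _ _ a0 _ _ hlt =>
    simp only [SDPState.maxBal, Function.update_apply]
    split_ifs with ha
    · exact ha ▸ (optLT_iff_lt.mp hlt).le
    · exact le_rfl
  | phase2b _ _ _ a0 _ _ _ hle =>
    simp only [SDPState.maxBal, Function.update_apply]
    split_ifs with ha
    · exact ha ▸ optLE_iff_le.mp hle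
    · exact le_rfl
  | _ => exact le_rfl

theorem maxBal_le_of_msg2b_mem (h : SDPStep Quorum s s') (hv : M.msg2b a c v ∈ s'.1)
    (hnew : M.msg2b a c v ∉ s.1) : s.maxBal a ≤ c := by
  cases h with
  | phase2b _ _ _ a0 b0 v0 _ hle =>
    obtain ⟨rfl, rfl, rfl⟩ : a = a0 ∧ c = b0 ∧ v = v0 := by simpa [hnew] using hv
    exact optLE_iff_le.mp hle
  | _ => simp_all

end SDPStep

theorem IsLastVoteBelow.of_step {w : Option (ℕ × V)} (h : SDPStep Quorum s s')
    (hb : (b : WithBot ℕ) ≤ s.maxBal a) (hw : IsLastVoteBelow s.1 a b w) :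
    IsLastVoteBelow s'.1 a b w :=
  hw.mono h.msgs_subset fun _ _ hc hv => by_contra fun hnew =>
    (hb.trans (h.maxBal_le_of_msg2b_mem hv hnew)).not_gt (WithBot.coe_lt_coe.mpr hc)

theorem SDPState.WontVote.of_step (h : SDPStep Quorum s s') (hw : s.WontVote a c) :
    s'.WontVote a c :=
  ⟨fun v hv => (h.maxBal_le_of_msg2b_mem hv (hw.1 v)).not_gt hw.2,
    hw.2.trans_le (h.maxBal_le a)⟩

theorem SDPState.SafeAt.of_step (h : SDPStep Quorum s s') (hs : s.SafeAt Quorum b v) :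
    s'.SafeAt Quorum b v := fun c hc => by
  obtain ⟨Q, hQ, hall⟩ := hs c hc
  exact ⟨Q, hQ, fun a ha => (hall a ha).imp (fun hv => h.msgs_subset hv) (·.of_step h)⟩

namespace SDPState.Inv

theorem msg1b_of_step (hinv : s.Inv Quorum) (h : SDPStep Quorum s s') {w : Option (ℕ × V)}
    (h1b : M.msg1b a b w ∈ s'.1) :
    (b : WithBot ℕ) ≤ s'.maxBal a ∧ IsLastVoteBelow s'.1 a b w := by
  by_cases hold : M.msg1b a b w ∈ s.1
  · obtain ⟨hb, hw⟩ := hinv.msg1b a b w hold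
    exact ⟨hb.trans (h.maxBal_le a), hw.of_step h hb⟩
  cases h with
  | phase1b _ _ mv a0 b0 _ hlt =>
    obtain ⟨rfl, rfl, rfl⟩ : a = a0 ∧ b = b0 ∧ w = mv a0 := by simpa [hold] using h1b
    refine ⟨by simp [SDPState.maxBal]; exact le_rfl, ?_⟩
    exact (hinv.maxVal a b (optLT_iff_lt.mp hlt)).mono Set.subset_union_left (by simp)
  | _ => simp_all

theorem maxVal_of_step (hinv : s.Inv Quorum) (h : SDPStep Quorum s s')
    (hb : s'.maxBal a < b) : IsLastVoteBelow s'.1 a b (s'.2.2 a) := by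
  have hmono := h.maxBal_le a
  cases h with
  | phase2b _ _ _ a0 b0 v0 _ hle =>
    by_cases ha : a = a0
    · subst ha
      have hb0 : b0 < b := by
        simp only [SDPState.maxBal, Function.update_self] at hb
        exact WithBot.coe_lt_coe.mp hb
      refine ⟨by simpa using hb0, fun c v _ hv => ⟨b0, v0, by simp, ?_⟩⟩
      rcases hv with hv | hv
      · exact WithBot.coe_le_coe.mp (((hinv.msg2b a c v hv).2).trans (optLE_iff_le.mp hle))
      · simp only [Set.mem_singleton_iff, M.msg2b.injEq] at hv
        exact hv.2.1.le
    · simp only [SDPState.maxBal, Function.update_of_ne ha] at hb ⊢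
      exact (hinv.maxVal a b hb).mono Set.subset_union_left (by simp [ha])
  | _ => exact (hinv.maxVal a b (hmono.trans_lt hb)).mono Set.subset_union_left (by simp)

theorem msg2a_unique_of_step (hinv : s.Inv Quorum) (h : SDPStep Quorum s s') {v' : V}
    (hv : M.msg2a b v ∈ s'.1) (hv' : M.msg2a b v' ∈ s'.1) : v = v' := by
  cases h with
  | phase2a _ _ _ _ _ _ hfresh =>
    simp only [Set.mem_union, Set.mem_singleton_iff, M.msg2a.injEq] at hv hv'
    rcases hv with hv | ⟨rfl, rfl⟩ <;> rcases hv' with hv' | ⟨hb, rfl⟩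
    · exact hinv.msg2a_unique _ _ _ hv hv'
    · exact absurd ⟨_, hb ▸ hv⟩ hfresh
    · exact absurd ⟨_, hv'⟩ hfresh
    · rfl
  | _ => exact hinv.msg2a_unique _ _ _ (by simpa using hv) (by simpa using hv')

theorem msg2a_safeAt_of_step (hinv : s.Inv Quorum) (h : SDPStep Quorum s s')
    (hv : M.msg2a b v ∈ s'.1) : s'.SafeAt Quorum b v := by
  refine SDPState.SafeAt.of_step h ?_
  by_cases hold : M.msg2a b v ∈ s.1
  · exact hinv.msg2a_safeAt b v hold
  cases h with
  | phase2a _ _ _ _ _ _ _ hQ hshows =>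
    obtain ⟨rfl, rfl⟩ : b = _ ∧ v = _ := by simpa [hold] using hv
    exact hinv.safeAt_of_showsSafeAt hQ hshows
  | _ => simp_all

theorem msg2b_of_step (hinv : s.Inv Quorum) (h : SDPStep Quorum s s')
    (hv : M.msg2b a b v ∈ s'.1) : M.msg2a b v ∈ s'.1 ∧ (b : WithBot ℕ) ≤ s'.maxBal a := by
  by_cases hold : M.msg2b a b v ∈ s.1
  · obtain ⟨h2a, hb⟩ := hinv.msg2b a b v hold
    exact ⟨h.msgs_subset h2a, hb.trans (h.maxBal_le a)⟩
  cases h with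
  | phase2b _ _ _ a0 b0 v0 h2a _ =>
    obtain ⟨rfl, rfl, rfl⟩ : a = a0 ∧ b = b0 ∧ v = v0 := by simpa [hold] using hv
    exact ⟨Or.inl h2a, by simp [SDPState.maxBal]; exact le_rfl⟩
  | _ => simp_all

theorem of_step (hinv : s.Inv Quorum) (h : SDPStep Quorum s s') : s'.Inv Quorum where
  msg1b _ _ _ := hinv.msg1b_of_step h
  maxVal _ _ := hinv.maxVal_of_step h
  msg2a_unique _ _ _ := hinv.msg2a_unique_of_step h
  msg2a_safeAt _ _ := hinv.msg2a_safeAt_of_step h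
  msg2b _ _ _ := hinv.msg2b_of_step h

theorem of_reflTransGen (h : Relation.ReflTransGen (SDPStep Quorum) (SDPInit A V) s) :
    s.Inv Quorum := by
  induction h with
  | refl => exact init
  | tail _ hstep ih => exact ih.of_step hstep

end SDPState.Inv

theorem SDPLStep.reflTransGen_snd {n : ℕ} {x y : (Fin n → ℕ) × SDPState A V}
    (h : SDPLStep Quorum n x y) : Relation.ReflTransGen (SDPStep Quorum) x.2 y.2 := by
  cases h with
  | inc => exact .refl
  | ruleA _ _ _ _ _ _ _ hstep => exact .single hstep
  | ruleB _ _ _ _ _ _ _ hstep => exact .single hstep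

end Steps

theorem sdpl_consistency_general {A V : Type} [DecidableEq A] (Quorum : Set A → Prop)
    (hQ : ∀ Q1 Q2 : Set A, Quorum Q1 → Quorum Q2 → ∃ a, a ∈ Q1 ∧ a ∈ Q2)
    (n : ℕ) (ctr : Fin n → ℕ)
    (msgs : Set (M A V)) (maxBal : A → Option ℕ) (maxVal : A → Option (ℕ × V))
    (v1 v2 : V)
    (hreach : Relation.ReflTransGen (SDPLStep Quorum n) (SDPLInit A V n)
        (ctr, (msgs, maxBal, maxVal)))
    (h1 : Chosen Quorum msgs v1) (h2 : Chosen Quorum msgs v2) :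
    v1 = v2 := by
  have hsdp : Relation.ReflTransGen (SDPStep Quorum) (SDPInit A V) (msgs, maxBal, maxVal) :=
    hreach.lift' Prod.snd fun _ _ h => h.reflTransGen_snd
  exact (SDPState.Inv.of_reflTransGen hsdp).eq_of_chosen hQ h1 h2

/-- Consistency of the lifted Paxos model: if a state is reachable in the lifted model from
the lifted initial state and both `v1` and `v2` are chosen, then `v1 = v2`. -/
theorem sdpl_consistency {A V : Type} [DecidableEq A] (Quorum : Set A → Prop)
    (hQ : ∀ Q1 Q2 : Set A, Quorum Q1 → Quorum Q2 → ∃ a, a ∈ Q1 ∧ a ∈ Q2)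
    (n : ℕ) (hn : 0 < n) (ctr : Fin n → ℕ)
    (msgs : Set (M A V)) (maxBal : A → Option ℕ) (maxVal : A → Option (ℕ × V))
    (v1 v2 : V)
    (hreach : Relation.ReflTransGen (SDPLStep Quorum n) (SDPLInit A V n)
        (ctr, (msgs, maxBal, maxVal)))
    (h1 : Chosen Quorum msgs v1) (h2 : Chosen Quorum msgs v2) :
    v1 = v2 :=
  sdpl_consistency_general Quorum hQ n ctr msgs maxBal maxVal v1 v2 hreach h1 h2
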